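/- arXiv:2503.15833 — 8 statements merged into one kernel-verified Lean document; each statement's English description precedes it below -/
import Mathlib

section
/- Let ℓ_1, ..., ℓ_m be nonnegative real numbers such that for every i, ℓ_i ≤ sum over j ≠ i of ℓ_j. Then for any integer d ≥ 2 there exist vectors b_1, ..., b_m in R^d with Euclidean norm ‖b_i‖ = ℓ_i for all i and b_1 + ... + b_m = 0. -/
/-!
It suffices to work in the plane `ℂ`, which embeds isometrically into any real inner product
space of dimension at least two. Let `ℓ k` be the largest length. Choosing signs greedily, the
other lengths have a signed sum of absolute value at most `ℓ k`, while their unsigned sum is at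
least `ℓ k`. Rotating each of these vectors continuously from the positive real axis to its signed
position, the intermediate value theorem yields a configuration whose sum has norm exactly `ℓ k`;
its negative closes the polygon.
-/

open Complex Finset Module

theorem exists_abs_eq_and_abs_sum_le {ι : Type*} [DecidableEq ι] (s : Finset ι) {ℓ : ι → ℝ} {M : ℝ}
    (hM : 0 ≤ M) (hℓ : ∀ j ∈ s, 0 ≤ ℓ j ∧ ℓ j ≤ M) :
    ∃ x : ι → ℝ, (∀ j ∈ s, |x j| = ℓ j) ∧ |∑ j ∈ s, x j| ≤ M := by
  induction s using Finset.induction_on with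
  | empty => exact ⟨0, by simp, by simpa using hM⟩
  | insert a s ha ih =>
    obtain ⟨x, hx, hsum⟩ := ih fun j hj => hℓ j (mem_insert_of_mem hj)
    obtain ⟨hℓa, hℓaM⟩ := hℓ a (mem_insert_self a s)
    set S := ∑ j ∈ s, x j
    -- the new term is placed against the current partial sum
    refine ⟨Function.update x a (if 0 ≤ S then -ℓ a else ℓ a), ?_, ?_⟩
    · intro j hj
      rcases mem_insert.mp hj with rfl | hj
      · split_ifs <;> simp [abs_of_nonneg hℓa]
      · rw [Function.update_of_ne (ne_of_mem_of_not_mem hj ha), hx j hj]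
    · rw [sum_insert ha, Function.update_self, sum_update_of_notMem ha]
      rw [abs_le] at hsum ⊢
      split_ifs with hS <;> constructor <;> linarith

theorem exists_norm_eq_and_norm_sum_eq {ι : Type*} [DecidableEq ι] (s : Finset ι) {ℓ : ι → ℝ} {r : ℝ}
    (hr : 0 ≤ r) (hℓ : ∀ j ∈ s, 0 ≤ ℓ j ∧ ℓ j ≤ r) (hr_le : r ≤ ∑ j ∈ s, ℓ j) :
    ∃ z : ι → ℂ, (∀ j ∈ s, ‖z j‖ = ℓ j) ∧ ‖∑ j ∈ s, z j‖ = r := by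
  obtain ⟨x, hx, hsum⟩ := exists_abs_eq_and_abs_sum_le s hr hℓ
  let path : ℝ → ι → ℂ := fun t j => ℓ j * exp (↑(t * arg (x j)) * I)
  have norm_path (t : ℝ) : ∀ j ∈ s, ‖path t j‖ = ℓ j := fun j hj => by
    rw [norm_mul, norm_exp_ofReal_mul_I, norm_real, Real.norm_of_nonneg (hℓ j hj).1, mul_one]
  have path_zero : ‖∑ j ∈ s, path 0 j‖ = ∑ j ∈ s, ℓ j := by
    simp only [path, zero_mul, ofReal_zero, exp_zero, mul_one, ← ofReal_sum, norm_real,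
      Real.norm_eq_abs]
    exact abs_of_nonneg (sum_nonneg fun j hj => (hℓ j hj).1)
  have path_one : ‖∑ j ∈ s, path 1 j‖ = |∑ j ∈ s, x j| := by
    have : ∀ j ∈ s, path 1 j = x j := fun j hj => by
      simpa [path, ← hx j hj] using norm_mul_exp_arg_mul_I (x j : ℂ)
    rw [sum_congr rfl this, ← ofReal_sum, norm_real, Real.norm_eq_abs]
  have hcont : ContinuousOn (fun t => ‖∑ j ∈ s, path t j‖) (Set.Icc 0 1) := by
    fun_prop
  obtain ⟨t, -, ht⟩ := intermediate_value_Icc' zero_le_one hcont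
    ⟨path_one ▸ hsum, path_zero ▸ hr_le⟩
  exact ⟨path t, norm_path t, ht⟩

theorem Complex.exists_sum_eq_zero_of_le_sum_erase {ι : Type*} [Fintype ι] [DecidableEq ι]
    {ℓ : ι → ℝ} (hℓ : ∀ i, 0 ≤ ℓ i) (htri : ∀ i, ℓ i ≤ ∑ j ∈ univ.erase i, ℓ j) :
    ∃ z : ι → ℂ, (∀ i, ‖z i‖ = ℓ i) ∧ ∑ i, z i = 0 := by
  cases isEmpty_or_nonempty ι
  · exact ⟨0, isEmptyElim, by simp⟩
  obtain ⟨k, hk⟩ := Finite.exists_max ℓ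
  obtain ⟨w, hw, hsum⟩ := exists_norm_eq_and_norm_sum_eq (univ.erase k) (hℓ k)
    (fun j _ => ⟨hℓ j, hk j⟩) (htri k)
  refine ⟨Function.update w k (-∑ j ∈ univ.erase k, w j), fun i => ?_, ?_⟩
  · rcases eq_or_ne i k with rfl | hi
    · rwa [Function.update_self, norm_neg]
    · rw [Function.update_of_ne hi, hw i (mem_erase.mpr ⟨hi, mem_univ i⟩)]
  · rw [sum_update_of_mem (mem_univ k), sdiff_singleton_eq_erase, neg_add_cancel]

theorem exists_linearIsometry_complex_of_two_le_finrank {E : Type*} [NormedAddCommGroup E]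
    [InnerProductSpace ℝ E] [FiniteDimensional ℝ E] (h : 2 ≤ finrank ℝ E) :
    Nonempty (ℂ →ₗᵢ[ℝ] E) := by
  let v : Fin 2 → E := stdOrthonormalBasis ℝ E ∘ Fin.castLE h
  have hv : Orthonormal ℝ v := (stdOrthonormalBasis ℝ E).orthonormal.comp _ (Fin.castLE_injective h)
  have hbasis : Orthonormal ℝ basisOneI := by simp [← toBasis_orthonormalBasisOneI]
  have hconstr : basisOneI.constr ℝ v ∘ basisOneI = v := funext (basisOneI.constr_basis ℝ v)
  exact ⟨(basisOneI.constr ℝ v).isometryOfOrthonormal hbasis (hconstr.symm ▸ hv)⟩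

theorem exists_norm_eq_sum_eq_zero_of_le_sum_erase {ι E : Type*} [Fintype ι] [DecidableEq ι]
    [NormedAddCommGroup E] [InnerProductSpace ℝ E] [FiniteDimensional ℝ E] (hE : 2 ≤ finrank ℝ E)
    {ℓ : ι → ℝ} (hℓ : ∀ i, 0 ≤ ℓ i) (htri : ∀ i, ℓ i ≤ ∑ j ∈ univ.erase i, ℓ j) :
    ∃ b : ι → E, (∀ i, ‖b i‖ = ℓ i) ∧ ∑ i, b i = 0 := by
  obtain ⟨L⟩ := exists_linearIsometry_complex_of_two_le_finrank hE
  obtain ⟨z, hz, hsum⟩ := Complex.exists_sum_eq_zero_of_le_sum_erase hℓ htri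
  exact ⟨L ∘ z, fun i => (L.norm_map _).trans (hz i), by simp [← map_sum, hsum]⟩

theorem stmt_1_general (m : ℕ) (ℓ : Fin m → ℝ) (hℓ : ∀ i, 0 ≤ ℓ i)
    (htri : ∀ i, ℓ i ≤ ∑ j ∈ Finset.univ.erase i, ℓ j)
    (d : ℕ) (hd : 2 ≤ d) :
    ∃ b : Fin m → EuclideanSpace ℝ (Fin d),
      (∀ i, ‖b i‖ = ℓ i) ∧ ∑ i, b i = 0 :=
  exists_norm_eq_sum_eq_zero_of_le_sum_erase (finrank_euclideanSpace_fin (𝕜 := ℝ) ▸ hd) hℓ htri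

theorem stmt_1 (m : ℕ) (hm : 1 ≤ m) (ℓ : Fin m → ℝ) (hℓ : ∀ i, 0 ≤ ℓ i)
    (htri : ∀ i, ℓ i ≤ ∑ j ∈ Finset.univ.erase i, ℓ j)
    (d : ℕ) (hd : 2 ≤ d) :
    ∃ b : Fin m → EuclideanSpace ℝ (Fin d),
      (∀ i, ‖b i‖ = ℓ i) ∧ ∑ i, b i = 0 :=
  stmt_1_general m ℓ hℓ htri d hd
end

section
/- Let ℓ_1, ..., ℓ_m be nonnegative real numbers, each a power of p (or zero), such that for every i, ℓ_i ≤ max over j ≠ i of ℓ_j. Then for any integer d ≥ 2 there exist vectors b_1, ..., b_m in Q_p^d with p-adic sup-norm ‖b_i‖ = ℓ_i for all i and b_1 + ... + b_m = 0. -/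
theorem stmt_2 (p : ℕ) [Fact p.Prime] (m : ℕ) (ℓ : Fin m → ℝ)
    (hval : ∀ i, ℓ i = 0 ∨ ∃ k : ℤ, ℓ i = (p : ℝ) ^ k)
    (htri : ∀ i, ∃ j, j ≠ i ∧ ℓ i ≤ ℓ j)
    (d : ℕ) (hd : 2 ≤ d) :
    ∃ b : Fin m → (Fin d → ℚ_[p]),
      (∀ i, ‖b i‖ = ℓ i) ∧ ∑ i, b i = 0 := by
  rcases Nat.eq_zero_or_pos m with rfl | hm
  · exact ⟨fun i => 0, fun i => i.elim0, by simp⟩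
  have hp1 : (1:ℝ) < p := Nat.one_lt_cast.mpr (Fact.out : p.Prime).one_lt
  -- nonnegativity of ℓ
  have hnn : ∀ i, 0 ≤ ℓ i := by
    intro i
    rcases hval i with h | ⟨k, h⟩
    · simp [h]
    · rw [h]; positivity
  -- scalars of the right norm
  have hx : ∀ i, ∃ x : ℚ_[p], ‖x‖ = ℓ i := by
    intro i
    rcases hval i with h | ⟨k, h⟩
    · exact ⟨0, by simp [h]⟩
    · refine ⟨(p : ℚ_[p]) ^ (-k), ?_⟩
      rw [norm_zpow, Padic.norm_p, inv_zpow', neg_neg, h]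
  choose x hxn using hx
  -- i0 : argmax
  obtain ⟨i0, -, hi0⟩ := Finset.exists_max_image Finset.univ ℓ ⟨⟨0, hm⟩, Finset.mem_univ _⟩
  have hi0' : ∀ i, ℓ i ≤ ℓ i0 := fun i => hi0 i (Finset.mem_univ i)
  obtain ⟨j0, hj0ne, hj0le⟩ := htri i0
  have hj0 : ℓ j0 = ℓ i0 := le_antisymm (hi0' j0) hj0le
  -- coordinate indices
  have h0 : (0:ℕ) < d := by omega
  have h1 : (1:ℕ) < d := by omega
  set c0 : Fin d := ⟨0, h0⟩
  set c1 : Fin d := ⟨1, h1⟩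
  have hc : c0 ≠ c1 := by simp [c0, c1, Fin.ext_iff]
  -- first and second coordinate functions
  set A : Fin m → ℚ_[p] := fun i => if i = i0 then -∑ j ∈ Finset.univ.erase i0, x j else x i with hA
  set B : Fin m → ℚ_[p] := fun i => if i = i0 then x i0 else if i = j0 then -x i0 else 0 with hB
  have hAn : ∀ i, ‖A i‖ ≤ ℓ i0 := by
    intro i
    by_cases h : i = i0
    · rw [h]
      simp only [hA, if_pos rfl, norm_neg]
      refine IsUltrametricDist.norm_sum_le_of_forall_le_of_nonneg (hnn i0) ?_
      intro j _
      rw [hxn]; exact hi0' j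
    · simp only [hA, if_neg h, hxn]; exact hi0' i
  have hAn' : ∀ i, i ≠ i0 → ‖A i‖ = ℓ i := by
    intro i h; simp [hA, if_neg h, hxn]
  have hBn : ∀ i, ‖B i‖ ≤ ℓ i0 := by
    intro i
    by_cases h : i = i0
    · simp [hB, if_pos h, hxn]
    · by_cases h' : i = j0
      · simp [hB, if_neg h, if_pos h', hxn]
      · simp [hB, if_neg h, if_neg h', hnn i0]
  refine ⟨fun i t => if t = c0 then A i else if t = c1 then B i else 0, ?_, ?_⟩
  · intro i
    refine le_antisymm ?_ ?_
    · refine (pi_norm_le_iff_of_nonneg (hnn i)).2 fun t => ?_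
      by_cases ht : t = c0
      · simp only [if_pos ht]
        by_cases h : i = i0
        · rw [h]; exact hAn i0
        · exact le_of_eq (hAn' i h)
      · by_cases ht' : t = c1
        · simp only [if_neg ht, if_pos ht']
          by_cases h : i = i0
          · rw [h]; exact hBn i0
          · by_cases h' : i = j0
            · rw [h']; simp [hB, if_neg (show j0 ≠ i0 from hj0ne), hxn, hj0]
            · simp [hB, if_neg h, if_neg h', hnn i]
        · simp [ht, ht', hnn i]
    · by_cases h : i = i0
      · rw [h]
        calc ℓ i0 = ‖B i0‖ := by simp [hB, hxn]
          _ ≤ _ := by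
            have := norm_le_pi_norm (fun t => if t = c0 then A i0 else if t = c1 then B i0 else 0) c1
            simpa [hc.symm] using this
      · calc ℓ i = ‖A i‖ := (hAn' i h).symm
          _ ≤ _ := by
            have := norm_le_pi_norm (fun t => if t = c0 then A i else if t = c1 then B i else 0) c0
            simpa using this
  · funext t
    rw [Finset.sum_apply]
    by_cases ht : t = c0
    · simp only [if_pos ht]
      have hsplitA : ∀ i, A i = x i + (if i = i0 then -∑ j, x j else 0) := by
        intro i
        by_cases h : i = i0
        · subst h
          simp only [hA, if_pos rfl]
          rw [Finset.sum_erase_eq_sub (Finset.mem_univ i)]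
          simp only [if_true]
          ring
        · simp [hA, h]
      have : ∑ i, A i = 0 := by
        rw [Finset.sum_congr rfl fun i _ => hsplitA i, Finset.sum_add_distrib]
        simp [Finset.sum_ite_eq']
      simpa using this
    · by_cases ht' : t = c1
      · simp only [if_neg ht, if_pos ht']
        have hsplit : ∀ i, B i = (if i = i0 then x i0 else 0) + (if i = j0 then -x i0 else 0) := by
          intro i
          by_cases h : i = i0
          · subst h
            simp [hB, Ne.symm hj0ne]
          · by_cases h' : i = j0 <;> simp [hB, h, h', hj0ne]
        have : ∑ i, B i = 0 := by
          rw [Finset.sum_congr rfl fun i _ => hsplit i, Finset.sum_add_distrib]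
          simp [Finset.sum_ite_eq']
        simpa using this
      · simp [ht, ht']
end

section
/- Let a_1, ..., a_n be real numbers. Suppose there exists a finitely supported probability distribution (X_1,...,X_n) on R^n, supported on the hyperplane Σ a_i x_i = 0, with all marginals equal in distribution. Then for every i, |a_i| ≤ Σ_{j≠i} |a_j|. -/
/-!
Since all marginals agree, the absolute first moment `m = E|X_k|` does not depend on `k`,
and it is positive because the distribution is not concentrated at the origin. On the
hyperplane, `|a_i x_i| = |∑_{j ≠ i} a_j x_j| ≤ ∑_{j ≠ i} |a_j| |x_j|`; taking expectations gives
`|a_i| m ≤ (∑_{j ≠ i} |a_j|) m`, and we divide by `m`.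
-/

open Finset

theorem Finset.sum_mul_comp_eq_sum_mul_sum_filter {α β R : Type*} [DecidableEq β]
    [CommSemiring R] (S : Finset α) (w : α → R) (g : α → β) (f : β → R) (V : Finset β)
    (hV : ∀ x ∈ S, g x ∈ V) :
    ∑ x ∈ S, w x * f (g x) = ∑ y ∈ V, f y * ∑ x ∈ S with g x = y, w x := by
  rw [← sum_fiberwise_of_maps_to hV]
  refine sum_congr rfl fun y _ => ?_
  rw [mul_sum]
  refine sum_congr rfl fun x hx => ?_
  rw [(mem_filter.mp hx).2, mul_comm]

theorem Finset.sum_mul_comp_eq_of_fiber_sum_eq {α β R : Type*} [DecidableEq β]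
    [CommSemiring R] (S : Finset α) (w : α → R) (g₁ g₂ : α → β) (f : β → R)
    (hfiber : ∀ y, ∑ x ∈ S with g₁ x = y, w x = ∑ x ∈ S with g₂ x = y, w x) :
    ∑ x ∈ S, w x * f (g₁ x) = ∑ x ∈ S, w x * f (g₂ x) := by
  have h₁ : ∀ x ∈ S, g₁ x ∈ S.image g₁ ∪ S.image g₂ :=
    fun x hx => mem_union_left _ (mem_image_of_mem _ hx)
  have h₂ : ∀ x ∈ S, g₂ x ∈ S.image g₁ ∪ S.image g₂ :=
    fun x hx => mem_union_right _ (mem_image_of_mem _ hx)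
  rw [sum_mul_comp_eq_sum_mul_sum_filter S w g₁ f _ h₁,
    sum_mul_comp_eq_sum_mul_sum_filter S w g₂ f _ h₂]
  exact sum_congr rfl fun y _ => by rw [hfiber y]

theorem exists_pos_sum_mul_abs_apply {ι α : Type*} (S : Finset (ι → α)) (w : (ι → α) → ℝ)
    [NormedAddCommGroup α] (hpos : ∀ x ∈ S, 0 < w x) (hnontriv : ∃ x ∈ S, x ≠ 0) :
    ∃ k, 0 < ∑ x ∈ S, w x * ‖x k‖ := by
  obtain ⟨x₀, hx₀S, hx₀⟩ := hnontriv
  obtain ⟨k, hk⟩ := Function.ne_iff.mp hx₀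
  refine ⟨k, lt_of_lt_of_le ?_ (single_le_sum (f := fun x => w x * ‖x k‖)
    (fun x hx => mul_nonneg (hpos x hx).le (norm_nonneg _)) hx₀S)⟩
  exact mul_pos (hpos x₀ hx₀S) (norm_pos_iff.mpr hk)

theorem abs_mul_le_sum_erase_of_sum_mul_eq_zero {ι : Type*} [Fintype ι] [DecidableEq ι]
    (a x : ι → ℝ) (hplane : ∑ j, a j * x j = 0) (i : ι) :
    |a i * x i| ≤ ∑ j ∈ univ.erase i, |a j| * |x j| := by
  have hsolve : a i * x i = -∑ j ∈ univ.erase i, a j * x j := by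
    rw [← add_sum_erase _ _ (mem_univ i)] at hplane
    linarith
  calc |a i * x i| = |∑ j ∈ univ.erase i, a j * x j| := by rw [hsolve, abs_neg]
    _ ≤ ∑ j ∈ univ.erase i, |a j * x j| := abs_sum_le_sum_abs _ _
    _ = ∑ j ∈ univ.erase i, |a j| * |x j| := sum_congr rfl fun j _ => abs_mul _ _

theorem stmt_5_general (n : ℕ) (a : Fin n → ℝ)
    (S : Finset (Fin n → ℝ)) (w : (Fin n → ℝ) → ℝ)
    (hpos : ∀ x ∈ S, 0 < w x)
    (hplane : ∀ x ∈ S, ∑ i, a i * x i = 0)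
    (hmarg : ∀ i j : Fin n, ∀ y : ℝ,
      ∑ x ∈ S.filter (fun x => x i = y), w x =
      ∑ x ∈ S.filter (fun x => x j = y), w x)
    (hnontriv : ∃ x ∈ S, x ≠ 0) :
    ∀ i : Fin n, |a i| ≤ ∑ j ∈ Finset.univ.erase i, |a j| := by
  intro i
  set m : Fin n → ℝ := fun k => ∑ x ∈ S, w x * |x k|
  have hm : ∀ k, m k = m i := fun k =>
    sum_mul_comp_eq_of_fiber_sum_eq S w (· k) (· i) abs (hmarg k i)
  have hm_pos : 0 < m i := by
    obtain ⟨k, hk⟩ := exists_pos_sum_mul_abs_apply S w hpos hnontriv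
    simpa only [Real.norm_eq_abs, m, hm k] using hk
  refine le_of_mul_le_mul_right ?_ hm_pos
  calc |a i| * m i = ∑ x ∈ S, w x * |a i * x i| := by
        simp only [m, mul_sum, abs_mul]; exact sum_congr rfl fun x _ => by ring
    _ ≤ ∑ x ∈ S, w x * ∑ j ∈ univ.erase i, |a j| * |x j| :=
        sum_le_sum fun x hx => mul_le_mul_of_nonneg_left
          (abs_mul_le_sum_erase_of_sum_mul_eq_zero a x (hplane x hx) i) (hpos x hx).le
    _ = ∑ j ∈ univ.erase i, |a j| * m j := by
        simp only [m, mul_sum]; rw [sum_comm]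
        exact sum_congr rfl fun j _ => sum_congr rfl fun x _ => by ring
    _ = (∑ j ∈ univ.erase i, |a j|) * m i := by
        rw [sum_mul]; exact sum_congr rfl fun j _ => by rw [hm j]

theorem stmt_5 (n : ℕ) (a : Fin n → ℝ)
    (S : Finset (Fin n → ℝ)) (w : (Fin n → ℝ) → ℝ)
    (hpos : ∀ x ∈ S, 0 < w x)
    (hsum : ∑ x ∈ S, w x = 1)
    (hplane : ∀ x ∈ S, ∑ i, a i * x i = 0)
    (hmarg : ∀ i j : Fin n, ∀ y : ℝ,
      ∑ x ∈ S.filter (fun x => x i = y), w x =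
      ∑ x ∈ S.filter (fun x => x j = y), w x)
    (hnontriv : ∃ x ∈ S, x ≠ 0) :
    ∀ i : Fin n, |a i| ≤ ∑ j ∈ Finset.univ.erase i, |a j| :=
  stmt_5_general n a S w hpos hplane hmarg hnontriv
end

section
/- Let a_1, ..., a_n be rational numbers, and suppose there exists a finite Galois extension L/Q and elements θ_1, ..., θ_n of L, all conjugate under Gal(L/Q), with Σ a_i θ_i = 0 and θ_1 ≠ 0. Then there exist N ≥ 1 and permutation matrices Π_1, ..., Π_n of size N such that det(Σ_i a_i Π_i) = 0. -/
/-!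
Index rows and columns by the automorphism group `G` of `L`, choose `σ_i ∈ G` with
`σ_i θ_1 = θ_i`, and let `Π_i` be the permutation `g ↦ g σ_i⁻¹` of `G`. Then the vector
`(g θ_1)_{g ∈ G}`, which is nonzero because `θ_1 ≠ 0`, is killed by `Σ a_i Π_i`: its
`g`-th entry is `Σ a_i g(σ_i θ_1) = g(Σ a_i θ_i) = 0`. A rational matrix with a nonzero
kernel vector over `L` has determinant zero.
-/

open Matrix

namespace Matrix

variable {ι : Type*} [Fintype ι] [DecidableEq ι]

theorem of_ite_perm_mulVec {R : Type*} [NonAssocSemiring R] (P : Equiv.Perm ι) (v : ι → R) :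
    (of fun k l => if P l = k then (1 : R) else 0) *ᵥ v = v ∘ P.symm := by
  ext k
  simp [mulVec, dotProduct, ← Equiv.eq_symm_apply]

theorem det_eq_zero_of_map_mulVec_eq_zero {K L : Type*} [Field K] [CommRing L] [IsDomain L]
    [Algebra K L] (M : Matrix ι ι K) {v : ι → L} (hv : v ≠ 0)
    (hker : M.map (algebraMap K L) *ᵥ v = 0) : M.det = 0 := by
  have : (M.map (algebraMap K L)).det = 0 := exists_mulVec_eq_zero_iff.mp ⟨v, hv, hker⟩
  rwa [← RingHom.mapMatrix_apply, ← RingHom.map_det,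
    map_eq_zero_iff _ (algebraMap K L).injective] at this

theorem det_sum_smul_of_ite_perm_eq_zero {s K L : Type*} [Fintype s] [Field K] [CommRing L]
    [IsDomain L] [Algebra K L] (a : s → K) (P : s → Equiv.Perm ι) {v : ι → L} (hv : v ≠ 0)
    (hker : ∀ k, ∑ i, a i • v ((P i).symm k) = 0) :
    (∑ i, a i • of fun k l => if P i l = k then (1 : K) else 0).det = 0 := by
  refine det_eq_zero_of_map_mulVec_eq_zero _ hv (funext fun k => ?_)
  have hmap : (∑ i, a i • of fun k l => if P i l = k then (1 : K) else 0).map (algebraMap K L)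
      = ∑ i, a i • of fun k l => if P i l = k then (1 : L) else 0 := by
    change (Algebra.ofId K L).mapMatrix _ = _
    simp only [map_sum, map_smul]
    congr! 2 with i
    ext k l
    simp [apply_ite]
  simp only [hmap, sum_mulVec, smul_mulVec, of_ite_perm_mulVec]
  simpa using hker k

end Matrix

theorem stmt_7_general (n : ℕ) (a : Fin n → ℚ)
    (L : Type*) [Field L] [Algebra ℚ L] [FiniteDimensional ℚ L]
    (θ : Fin n → L)
    (hconj : ∀ i j : Fin n, ∃ σ : L ≃ₐ[ℚ] L, σ (θ i) = θ j)
    (hrel : ∑ i, a i • θ i = 0)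
    (hn : 0 < n) (hθ : θ ⟨0, hn⟩ ≠ 0) :
    ∃ (N : ℕ), 1 ≤ N ∧ ∃ P : Fin n → Equiv.Perm (Fin N),
      Matrix.det (∑ i, a i • (Matrix.of fun k l : Fin N =>
        if P i l = k then (1 : ℚ) else 0)) = 0 := by
  classical
  let e := (Fintype.equivFin (L ≃ₐ[ℚ] L)).symm
  choose σ hσ using hconj ⟨0, hn⟩
  refine ⟨_, Fintype.card_pos, fun i => (e.trans (Equiv.mulRight (σ i)⁻¹)).trans e.symm, ?_⟩
  refine det_sum_smul_of_ite_perm_eq_zero a _ (v := fun k => e k (θ ⟨0, hn⟩))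
    (fun h => hθ ?_) fun k => ?_
  · simpa using congrFun h (e.symm 1)
  · simpa [hσ, map_smul] using congrArg (e k) hrel

theorem stmt_7 (n : ℕ) (a : Fin n → ℚ)
    (L : Type*) [Field L] [Algebra ℚ L] [FiniteDimensional ℚ L] [IsGalois ℚ L]
    (θ : Fin n → L)
    (hconj : ∀ i j : Fin n, ∃ σ : L ≃ₐ[ℚ] L, σ (θ i) = θ j)
    (hrel : ∑ i, a i • θ i = 0)
    (hn : 0 < n) (hθ : θ ⟨0, hn⟩ ≠ 0) :
    ∃ (N : ℕ), 1 ≤ N ∧ ∃ P : Fin n → Equiv.Perm (Fin N),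
      Matrix.det (∑ i, a i • (Matrix.of fun k l : Fin N =>
        if P i l = k then (1 : ℚ) else 0)) = 0 :=
  stmt_7_general n a L θ hconj hrel hn hθ
end

section
/- Let η, C > 0 and let F : {1,...,M} → R satisfy Σ_{x=1}^{M-k} |F(x+k) − F(x)| ≤ C for all integers k with 1 ≤ k ≤ ηM. Then Σ_{x=1}^M |F(x) − A| = O_η(C), where A is the mean of F over {1,...,M}; that is, there is a constant c depending only on η (not on M, F, or C) with Σ_x |F(x) − A| ≤ cC. -/
/-!
Averaging over `y`, `∑ₓ |F x - A| ≤ (1/M) ∑ₓ ∑_y |F x - F y|`, and grouping the pairs by their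
distance `d` bounds this by `(2/M) ∑_{d < M} V d`, where `V d = ∑ₓ |F (x + d) - F x|`.
The triangle inequality makes `V` subadditive, so writing `d = qK + r` with `K = ⌊ηM⌋₊` gives
`V d ≤ q V K + V r ≤ (M/K + 1) C`, and `M/K ≤ 2/η` because `K > ηM/2`.
-/

open Finset

def shiftVariation (F : ℕ → ℝ) (M k : ℕ) : ℝ :=
  ∑ x ∈ Icc 1 (M - k), |F (x + k) - F x|

lemma sum_Icc_sub_add_le_sum_Icc {g : ℕ → ℝ} (hg : ∀ x, 0 ≤ g x) (m s : ℕ) :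
    ∑ x ∈ Icc 1 (m - s), g (x + s) ≤ ∑ x ∈ Icc 1 m, g x := by
  have hshift : ∑ x ∈ Icc 1 (m - s), g (x + s) = ∑ x ∈ Icc (1 + s) (m - s + s), g x := by
    rw [← map_add_right_Icc, sum_map]
    rfl
  rw [hshift]
  refine sum_le_sum_of_subset_of_nonneg (fun y hy => ?_) fun x _ _ => hg x
  simp only [mem_Icc] at hy ⊢
  omega

namespace shiftVariation

variable (F : ℕ → ℝ) (M : ℕ)

@[simp] lemma zero_right : shiftVariation F M 0 = 0 := by
  simp [shiftVariation]

lemma subadditive : Subadditive (shiftVariation F M) := by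
  intro a b
  calc ∑ x ∈ Icc 1 (M - (a + b)), |F (x + (a + b)) - F x|
      ≤ ∑ x ∈ Icc 1 (M - (a + b)), (|F (x + a) - F x| + |F (x + a + b) - F (x + a)|) := by
        gcongr with x
        rw [← add_assoc, add_comm |F (x + a) - F x|]
        exact abs_sub_le _ _ _
    _ = ∑ x ∈ Icc 1 (M - (a + b)), |F (x + a) - F x|
          + ∑ x ∈ Icc 1 (M - (a + b)), |F (x + a + b) - F (x + a)| := sum_add_distrib
    _ ≤ shiftVariation F M a + shiftVariation F M b :=
        add_le_add
          (sum_le_sum_of_subset_of_nonneg (Icc_subset_Icc_right (by omega))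
            fun _ _ _ => abs_nonneg _)
          (by
            rw [add_comm a b, ← Nat.sub_sub]
            exact sum_Icc_sub_add_le_sum_Icc (g := fun y => |F (y + b) - F y|)
              (fun _ => abs_nonneg _) (M - b) a)

lemma le_of_forall_le {K : ℕ} (hK : 0 < K) {C : ℝ} (hC : 0 ≤ C)
    (h : ∀ k, 1 ≤ k → k ≤ K → shiftVariation F M k ≤ C) (d : ℕ) :
    shiftVariation F M d ≤ (d / K : ℕ) * C + C := by
  have hrem : shiftVariation F M (d % K) ≤ C := by
    rcases Nat.eq_zero_or_pos (d % K) with h0 | hpos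
    · simpa [h0] using hC
    · exact h _ hpos (Nat.mod_lt d hK).le
  calc shiftVariation F M d = shiftVariation F M (d / K * K + d % K) := by
        rw [Nat.div_add_mod']
    _ ≤ (d / K : ℕ) * shiftVariation F M K + shiftVariation F M (d % K) :=
        (subadditive F M).apply_mul_add_le _ _ _
    _ ≤ (d / K : ℕ) * C + C :=
        add_le_add (mul_le_mul_of_nonneg_left (h K hK le_rfl) (Nat.cast_nonneg _)) hrem

end shiftVariation

lemma sum_abs_sub_mean_le {ι : Type*} (s : Finset ι) (f : ι → ℝ) :
    ∑ x ∈ s, |f x - (∑ y ∈ s, f y) / #s| ≤ (∑ x ∈ s, ∑ y ∈ s, |f x - f y|) / #s := by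
  rcases s.eq_empty_or_nonempty with rfl | hs
  · simp
  refine (sum_le_sum fun x _ => ?_).trans_eq (sum_div _ _ _).symm
  have hmean : f x - (∑ y ∈ s, f y) / #s = (∑ y ∈ s, (f x - f y)) / #s := by
    rw [sum_sub_distrib, sum_const, nsmul_eq_mul]
    field_simp [hs.card_pos.ne']
  rw [hmean, abs_div, Nat.abs_cast]
  gcongr
  exact abs_sum_le_sum_abs _ _

lemma sum_Icc_sum_Icc_le_two_mul {g : ℕ → ℕ → ℝ} (hg : ∀ x y, 0 ≤ g x y)
    (hsymm : ∀ x y, g x y = g y x) (M : ℕ) :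
    ∑ x ∈ Icc 1 M, ∑ y ∈ Icc 1 M, g x y ≤ 2 * ∑ x ∈ Icc 1 M, ∑ y ∈ Icc x M, g x y := by
  have hsplit : ∀ x ∈ Icc 1 M,
      ∑ y ∈ Icc 1 M, g x y ≤ ∑ y ∈ Icc 1 x, g x y + ∑ y ∈ Icc x M, g x y := by
    intro x hx
    have hunion : Icc 1 x ∪ Icc x M = Icc 1 M := by
      ext y
      simp only [mem_union, mem_Icc] at hx ⊢
      omega
    rw [← sum_union_inter, hunion]
    exact le_add_of_nonneg_right (sum_nonneg fun y _ => hg x y)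
  have hlower : ∑ x ∈ Icc 1 M, ∑ y ∈ Icc 1 x, g x y = ∑ x ∈ Icc 1 M, ∑ y ∈ Icc x M, g x y := by
    rw [sum_comm' (t' := Icc 1 M) (s' := fun y => Icc y M) fun x y => by
      simp only [mem_Icc]
      omega]
    simp only [hsymm _ _]
  calc ∑ x ∈ Icc 1 M, ∑ y ∈ Icc 1 M, g x y
      ≤ ∑ x ∈ Icc 1 M, (∑ y ∈ Icc 1 x, g x y + ∑ y ∈ Icc x M, g x y) := sum_le_sum hsplit
    _ = 2 * ∑ x ∈ Icc 1 M, ∑ y ∈ Icc x M, g x y := by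
        rw [sum_add_distrib, hlower, two_mul]

lemma sum_Icc_sum_Icc_eq_sum_range (g : ℕ → ℕ → ℝ) (M : ℕ) :
    ∑ x ∈ Icc 1 M, ∑ y ∈ Icc x M, g x y = ∑ d ∈ range M, ∑ x ∈ Icc 1 (M - d), g x (x + d) := by
  calc ∑ x ∈ Icc 1 M, ∑ y ∈ Icc x M, g x y
      = ∑ x ∈ Icc 1 M, ∑ d ∈ range (M + 1 - x), g x (x + d) := by
        refine sum_congr rfl fun x _ => ?_
        rw [← Ico_add_one_right_eq_Icc, sum_Ico_eq_sum_range]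
    _ = ∑ d ∈ range M, ∑ x ∈ Icc 1 (M - d), g x (x + d) := sum_comm' fun x d => by
        simp only [mem_Icc, mem_range]
        omega

lemma sum_abs_sub_mean_le_sum_shiftVariation (F : ℕ → ℝ) (M : ℕ) :
    ∑ x ∈ Icc 1 M, |F x - (∑ y ∈ Icc 1 M, F y) / M|
      ≤ 2 * (∑ d ∈ range M, shiftVariation F M d) / M := by
  have hcard : (#(Icc 1 M) : ℝ) = M := by simp
  calc ∑ x ∈ Icc 1 M, |F x - (∑ y ∈ Icc 1 M, F y) / M|
      ≤ (∑ x ∈ Icc 1 M, ∑ y ∈ Icc 1 M, |F x - F y|) / M := by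
        simpa only [hcard] using sum_abs_sub_mean_le (Icc 1 M) F
    _ ≤ 2 * (∑ x ∈ Icc 1 M, ∑ y ∈ Icc x M, |F x - F y|) / M := by
        gcongr
        exact sum_Icc_sum_Icc_le_two_mul (fun _ _ => abs_nonneg _) (fun _ _ => abs_sub_comm _ _) M
    _ = 2 * (∑ d ∈ range M, shiftVariation F M d) / M := by
        rw [sum_Icc_sum_Icc_eq_sum_range]
        congr 2
        exact sum_congr rfl fun d _ => sum_congr rfl fun x _ => abs_sub_comm _ _

lemma natCast_div_floor_mul_le {η : ℝ} {M : ℕ} (h : 1 ≤ η * M) : (M : ℝ) / ⌊η * M⌋₊ ≤ 2 / η := by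
  have hη : 0 < η := pos_of_mul_pos_left (by linarith) M.cast_nonneg
  have hK := Nat.div_two_lt_floor h
  rw [div_le_div_iff₀ (by linarith) hη]
  linarith

theorem stmt_10_general (η : ℝ) :
    ∃ c : ℝ, ∀ (M : ℕ) (F : ℕ → ℝ) (C : ℝ), 0 < C → 1 ≤ η * M →
      (∀ k : ℕ, 1 ≤ k → (k : ℝ) ≤ η * M →
        ∑ x ∈ Finset.Icc 1 (M - k), |F (x + k) - F x| ≤ C) →
      ∑ x ∈ Finset.Icc 1 M, |F x - (∑ y ∈ Finset.Icc 1 M, F y) / M| ≤ c * C := by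
  refine ⟨2 * (2 / η + 1), fun M F C hC hηM h => ?_⟩
  have hM : (M : ℝ) ≠ 0 := by
    rintro hM
    norm_num [hM] at hηM
  set K := ⌊η * M⌋₊
  have hK : 0 < K := Nat.floor_pos.2 hηM
  have hV : ∀ d ∈ range M, shiftVariation F M d ≤ (2 / η + 1) * C := by
    intro d hd
    have hdK : ((d / K : ℕ) : ℝ) ≤ 2 / η :=
      calc ((d / K : ℕ) : ℝ) ≤ d / K := Nat.cast_div_le
        _ ≤ M / K := by gcongr; exact_mod_cast (mem_range.1 hd).le
        _ ≤ 2 / η := natCast_div_floor_mul_le hηM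
    calc shiftVariation F M d ≤ (d / K : ℕ) * C + C :=
          shiftVariation.le_of_forall_le F M hK hC.le
            (fun k hk hkK => h k hk ((Nat.cast_le.2 hkK).trans (Nat.floor_le (by linarith)))) d
      _ ≤ (2 / η + 1) * C := by
          rw [add_one_mul]
          gcongr
  calc ∑ x ∈ Icc 1 M, |F x - (∑ y ∈ Icc 1 M, F y) / M|
      ≤ 2 * (∑ d ∈ range M, shiftVariation F M d) / M :=
        sum_abs_sub_mean_le_sum_shiftVariation F M
    _ ≤ 2 * (M * ((2 / η + 1) * C)) / M := by
        gcongr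
        simpa using sum_le_card_nsmul _ _ _ hV
    _ = 2 * (2 / η + 1) * C := by field_simp

theorem stmt_10 (η : ℝ) (hη : 0 < η) :
    ∃ c : ℝ, ∀ (M : ℕ) (F : ℕ → ℝ) (C : ℝ), 0 < C → 1 ≤ η * M →
      (∀ k : ℕ, 1 ≤ k → (k : ℝ) ≤ η * M →
        ∑ x ∈ Finset.Icc 1 (M - k), |F (x + k) - F x| ≤ C) →
      ∑ x ∈ Finset.Icc 1 M, |F x - (∑ y ∈ Finset.Icc 1 M, F y) / M| ≤ c * C :=
  stmt_10_general η
end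

section
/- Let η, C > 0 and let F : {1,...,M} → R satisfy Σ_x |Δ_{k'} Δ_k F(x)| ≤ C for all integers k, k' with 1 ≤ k, k' ≤ ηM, where Δ_k F(x) = F(x+k) − F(x). Then there exist real numbers m and b such that Σ_{x=1}^M |F(x) − (mx + b)| ≤ cC, where c depends only on η. -/
/-!
Telescoping in the step gives, for `g : ℕ → ℝ` and `1 ≤ K`,
`K (g x - ⟨g⟩) = -∑_{k ≤ K} (g (x + k) - g x) + ∑_{y ≤ x} (g (y + K) - g y)` with `⟨g⟩` the mean of
`g` over `1, …, K`; so if every `k`-difference of `g`, `k ≤ K`, has ℓ¹-norm at most `D` on `1, …, N`,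
then `g` is within `(1 + N / K) D` of a constant there. Applied to `g = Δ_{k'} F` this makes
`Δ_{k'} F` nearly a constant `a k'`; the same identity with these approximate increments then puts
`F` within `(1 + N / K)² C` of a line on `1, …, N = M - 2K`. The last `2K` points are reached through
one more second difference of step `2K`. Taking `K` comparable to `min (η M) M` bounds `M / K` in terms
of `η` alone; when `M < 6` a step-one induction starting from the line through the first two points
suffices.
-/

open Finset

theorem sum_Ioc_add' {M : Type*} [AddCommMonoid M] (f : ℕ → M) (a b c : ℕ) :
    ∑ x ∈ Ioc a b, f (x + c) = ∑ x ∈ Ioc (a + c) (b + c), f x := by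
  rw [← map_add_right_Ioc, sum_map]
  rfl

theorem sum_Ioc_shift_sub_comm {G : Type*} [AddCommGroup G] (g : ℕ → G) (x K : ℕ) :
    ∑ y ∈ Ioc 0 x, (g (y + K) - g y) = ∑ y ∈ Ioc 0 K, (g (y + x) - g y) := by
  have h := (sum_Ioc_consecutive g (Nat.zero_le x) (Nat.le_add_right x K)).trans
    (sum_Ioc_consecutive g (Nat.zero_le K) (Nat.le_add_left K x)).symm
  rw [sum_sub_distrib, sum_sub_distrib, sum_Ioc_add', sum_Ioc_add', zero_add, zero_add,
    add_comm K x]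
  linear_combination (norm := abel) -h

theorem mul_sub_linear_eq (g a : ℕ → ℝ) {K : ℕ} (hK : 0 < K) (x : ℕ) :
    K * (g x - (a K / K * x + (∑ k ∈ Ioc 0 K, (g k - a k)) / K)) =
      ∑ k ∈ Ioc 0 K, (g x - g (x + k) + a k) + ∑ y ∈ Ioc 0 x, (g (y + K) - g y - a K) := by
  have hK' : (K : ℝ) ≠ 0 := by positivity
  have ht := sum_Ioc_shift_sub_comm g x K
  simp only [sum_add_distrib, sum_sub_distrib, sum_const, Nat.card_Ioc, Nat.sub_zero,
    nsmul_eq_mul] at ht ⊢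
  field_simp
  simp only [add_comm x] at ht ⊢
  linear_combination -ht

theorem sum_abs_sub_linear_le (g a : ℕ → ℝ) {K N : ℕ} (hK : 0 < K) {D : ℝ}
    (h : ∀ k ∈ Ioc 0 K, ∑ x ∈ Ioc 0 N, |g (x + k) - g x - a k| ≤ D) :
    ∑ x ∈ Ioc 0 N, |g x - (a K / K * x + (∑ k ∈ Ioc 0 K, (g k - a k)) / K)| ≤
      (1 + N / K) * D := by
  have hK' : (0 : ℝ) < K := by exact_mod_cast hK
  have pointwise : ∀ x ∈ Ioc 0 N,
      K * |g x - (a K / K * x + (∑ k ∈ Ioc 0 K, (g k - a k)) / K)| ≤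
        ∑ k ∈ Ioc 0 K, |g (x + k) - g x - a k| + ∑ y ∈ Ioc 0 N, |g (y + K) - g y - a K| := by
    intro x hx
    rw [← abs_of_pos hK', ← abs_mul, abs_of_pos hK', mul_sub_linear_eq g a hK x]
    refine (abs_add_le _ _).trans (add_le_add ?_ ?_)
    · refine (abs_sum_le_sum_abs _ _).trans_eq (sum_congr rfl fun k _ => ?_)
      rw [← abs_neg, neg_add', neg_sub]
    · exact (abs_sum_le_sum_abs _ _).trans <| sum_le_sum_of_subset_of_nonneg
        (Ioc_subset_Ioc_right (mem_Ioc.1 hx).2) fun _ _ _ => abs_nonneg _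
  have hsum : K * ∑ x ∈ Ioc 0 N,
      |g x - (a K / K * x + (∑ k ∈ Ioc 0 K, (g k - a k)) / K)| ≤ K * D + N * D := calc
    _ ≤ ∑ x ∈ Ioc 0 N, (∑ k ∈ Ioc 0 K, |g (x + k) - g x - a k| +
          ∑ y ∈ Ioc 0 N, |g (y + K) - g y - a K|) := by
      rw [mul_sum]; exact sum_le_sum pointwise
    _ = ∑ k ∈ Ioc 0 K, ∑ x ∈ Ioc 0 N, |g (x + k) - g x - a k| +
          N * ∑ y ∈ Ioc 0 N, |g (y + K) - g y - a K| := by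
      rw [sum_add_distrib, sum_comm, sum_const, Nat.card_Ioc, Nat.sub_zero, nsmul_eq_mul]
    _ ≤ ∑ _k ∈ Ioc 0 K, D + N * D :=
      add_le_add (sum_le_sum h) (mul_le_mul_of_nonneg_left (h K (right_mem_Ioc.2 hK)) N.cast_nonneg)
    _ = K * D + N * D := by rw [sum_const, Nat.card_Ioc, Nat.sub_zero, nsmul_eq_mul]
  calc _ ≤ (K * D + N * D) / K := by rw [le_div_iff₀ hK', mul_comm]; exact hsum
    _ = (1 + N / K) * D := by field_simp

theorem sum_abs_sub_average_le (g : ℕ → ℝ) {K N : ℕ} (hK : 0 < K) {D : ℝ}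
    (h : ∀ k ∈ Ioc 0 K, ∑ x ∈ Ioc 0 N, |g (x + k) - g x| ≤ D) :
    ∑ x ∈ Ioc 0 N, |g x - (∑ k ∈ Ioc 0 K, g k) / K| ≤ (1 + N / K) * D := by
  simpa using sum_abs_sub_linear_le g 0 hK (by simpa using h)

def mixedDiff (F : ℕ → ℝ) (k k' x : ℕ) : ℝ := F (x + k + k') - F (x + k) - F (x + k') + F x

theorem mixedDiff_sub_linear (F : ℕ → ℝ) (m b : ℝ) (k k' x : ℕ) :
    mixedDiff (fun x => F x - (m * x + b)) k k' x = mixedDiff F k k' x := by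
  simp only [mixedDiff]; push_cast; ring

theorem exists_sum_abs_sub_linear_le (F : ℕ → ℝ) {K N : ℕ} (hK : 0 < K) {C : ℝ}
    (h : ∀ k ∈ Ioc 0 K, ∀ k' ∈ Ioc 0 K, ∑ x ∈ Ioc 0 N, |mixedDiff F k k' x| ≤ C) :
    ∃ m b : ℝ, ∑ x ∈ Ioc 0 N, |F x - (m * x + b)| ≤ (1 + N / K) ^ 2 * C := by
  set a : ℕ → ℝ := fun k' => (∑ k ∈ Ioc 0 K, (F (k + k') - F k)) / K
  have step : ∀ k' ∈ Ioc 0 K, ∑ x ∈ Ioc 0 N, |F (x + k') - F x - a k'| ≤ (1 + N / K) * C :=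
    fun k' hk' => sum_abs_sub_average_le (fun x => F (x + k') - F x) hK fun k hk =>
      (h k hk k' hk').trans_eq' <| sum_congr rfl fun x _ => by simp only [mixedDiff]; ring_nf
  exact ⟨_, _, (sum_abs_sub_linear_le F a hK step).trans_eq (by ring)⟩

theorem sum_abs_Ioc_add_le (h : ℕ → ℝ) {L N : ℕ} (hLN : 2 * L ≤ N) :
    ∑ x ∈ Ioc 0 (N + L), |h x| ≤
      ∑ y ∈ Ioc (N - 2 * L) (N - L), |mixedDiff h L L y| + 4 * ∑ x ∈ Ioc 0 N, |h x| := by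
  obtain ⟨A, rfl⟩ : ∃ A, N = A + L + L := ⟨N - 2 * L, by omega⟩
  set S := ∑ x ∈ Ioc 0 (A + L + L), |h x|
  rw [show A + L + L - 2 * L = A by omega, show A + L + L - L = A + L by omega,
    ← sum_Ioc_consecutive _ (Nat.zero_le _) (Nat.le_add_right _ L)]
  have tail : ∑ x ∈ Ioc (A + L + L) (A + L + L + L), |h x| =
      ∑ y ∈ Ioc A (A + L), |h (y + L + L)| := by
    simp only [add_assoc, sum_Ioc_add' (fun x => |h x|)]
  have pointwise (y : ℕ) : |h (y + L + L)| ≤ |mixedDiff h L L y| + 2 * |h (y + L)| + |h y| := by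
    have e : h (y + L + L) = mixedDiff h L L y + 2 * h (y + L) + -h y := by
      simp only [mixedDiff]; ring
    calc |h (y + L + L)| ≤ |mixedDiff h L L y| + |2 * h (y + L)| + |-h y| := by
          rw [e]; exact abs_add_three _ _ _
      _ = |mixedDiff h L L y| + 2 * |h (y + L)| + |h y| := by rw [abs_mul, abs_neg, abs_two]
  have middle : ∑ y ∈ Ioc A (A + L), |h (y + L)| ≤ S := by
    rw [sum_Ioc_add' (fun x => |h x|)]
    exact sum_le_sum_of_subset_of_nonneg (Ioc_subset_Ioc_left (Nat.zero_le _))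
      fun _ _ _ => abs_nonneg _
  have front : ∑ y ∈ Ioc A (A + L), |h y| ≤ S :=
    sum_le_sum_of_subset_of_nonneg (Ioc_subset_Ioc (Nat.zero_le _) (by omega))
      fun _ _ _ => abs_nonneg _
  have := sum_le_sum fun y (_ : y ∈ Ioc A (A + L)) => pointwise y
  rw [sum_add_distrib, sum_add_distrib, ← mul_sum] at this
  linarith

def MixedDiffBound (F : ℕ → ℝ) (M K : ℕ) (C : ℝ) : Prop :=
  ∀ k ∈ Icc 1 K, ∀ k' ∈ Icc 1 K, ∑ x ∈ Icc 1 (M - k - k'), |mixedDiff F k k' x| ≤ C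

namespace MixedDiffBound

variable {F : ℕ → ℝ} {M K : ℕ} {C : ℝ}

theorem mono (h : MixedDiffBound F M K C) {L : ℕ} (hLK : L ≤ K) : MixedDiffBound F M L C :=
  fun k hk k' hk' => h k (Icc_subset_Icc_right hLK hk) k' (Icc_subset_Icc_right hLK hk')

theorem sum_Ioc_le (h : MixedDiffBound F M K C) {k k' : ℕ} (hk : k ∈ Icc 1 K)
    (hk' : k' ∈ Icc 1 K) {A B : ℕ} (hB : B ≤ M - k - k') :
    ∑ x ∈ Ioc A B, |mixedDiff F k k' x| ≤ C := by
  refine (sum_le_sum_of_subset_of_nonneg ?_ fun _ _ _ => abs_nonneg _).trans (h k hk k' hk')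
  intro x hx
  rw [mem_Ioc] at hx
  exact mem_Icc.2 ⟨by omega, by omega⟩

theorem exists_sum_abs_sub_linear_le_of_one (h : MixedDiffBound F M 1 C) :
    ∃ m b : ℝ, ∑ x ∈ Icc 1 M, |F x - (m * x + b)| ≤ (4 ^ M - 1) * C := by
  have one_mem : 1 ∈ Icc 1 1 := left_mem_Icc.2 le_rfl
  have hC : 0 ≤ C := (sum_nonneg fun _ _ => abs_nonneg _).trans (h 1 one_mem 1 one_mem)
  set e : ℕ → ℝ := fun x => F x - ((F 2 - F 1) * x + (2 * F 1 - F 2))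
  have claim : ∀ N ≤ M, ∑ x ∈ Ioc 0 N, |e x| ≤ (4 ^ N - 1) * C := by
    intro N
    induction N with
    | zero => simp
    | succ N ih =>
      intro hN
      have h4 : (1 : ℝ) ≤ 4 ^ N := one_le_pow₀ (by norm_num)
      rcases lt_or_ge N 2 with hN2 | hN2
      · rw [sum_eq_zero fun x hx => ?_]
        · rw [pow_succ]; exact mul_nonneg (by linarith) hC
        obtain rfl | rfl : x = 1 ∨ x = 2 := by rw [mem_Ioc] at hx; omega
        all_goals simp only [e, abs_eq_zero]; push_cast; ring
      · have ext := sum_abs_Ioc_add_le e (L := 1) (by omega : 2 * 1 ≤ N)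
        simp only [e, mixedDiff_sub_linear] at ext
        have hmix := h.sum_Ioc_le one_mem one_mem (A := N - 2 * 1) (B := N - 1) (by omega)
        have := ih (by omega)
        rw [pow_succ]
        linarith
  refine ⟨F 2 - F 1, 2 * F 1 - F 2, ?_⟩
  rw [show Icc 1 M = Ioc 0 M from Icc_add_one_left_eq_Ioc 0 M]
  exact claim M le_rfl

theorem exists_sum_abs_sub_linear_le_of_six_mul_le (h : MixedDiffBound F M (2 * K) C)
    (hK : 0 < K) (hKM : 6 * K ≤ M) :
    ∃ m b : ℝ, ∑ x ∈ Icc 1 M, |F x - (m * x + b)| ≤ (4 * (1 + M / K) ^ 2 + 1) * C := by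
  obtain ⟨N, rfl⟩ : ∃ N, M = N + 2 * K := ⟨M - 2 * K, by omega⟩
  have mem {k : ℕ} (hk : k ∈ Ioc 0 K) : k ∈ Icc 1 (2 * K) := by
    rw [mem_Ioc] at hk; exact mem_Icc.2 ⟨hk.1, by omega⟩
  have two_mul_mem : 2 * K ∈ Icc 1 (2 * K) := right_mem_Icc.2 (by omega)
  obtain ⟨m, b, hmb⟩ := exists_sum_abs_sub_linear_le F hK (N := N) fun k hk k' hk' =>
    h.sum_Ioc_le (mem hk) (mem hk') (by rw [mem_Ioc] at hk hk'; omega)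
  refine ⟨m, b, ?_⟩
  have ext := sum_abs_Ioc_add_le (fun x => F x - (m * x + b)) (L := 2 * K) (N := N) (by omega)
  simp only [mixedDiff_sub_linear] at ext
  have hmix := h.sum_Ioc_le two_mul_mem two_mul_mem (A := N - 2 * (2 * K)) (B := N - 2 * K)
    (by omega)
  have hC : 0 ≤ C := (sum_nonneg fun _ _ => abs_nonneg _).trans hmix
  have hsq : (1 + N / K : ℝ) ^ 2 ≤ (1 + ↑(N + 2 * K) / K) ^ 2 := by
    gcongr
    exact_mod_cast Nat.le_add_right N (2 * K)
  have := mul_le_mul_of_nonneg_right hsq hC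
  rw [show Icc 1 (N + 2 * K) = Ioc 0 (N + 2 * K) from Icc_add_one_left_eq_Ioc 0 _]
  linarith

end MixedDiffBound

theorem exists_scale_of_two_le_mul {η : ℝ} (hη : 0 < η) {M : ℕ} (h2 : 2 ≤ η * M) (h6 : 6 ≤ M) :
    ∃ K : ℕ, 0 < K ∧ 6 * K ≤ M ∧ ((2 * K : ℕ) : ℝ) ≤ η * M ∧ (M : ℝ) / K ≤ 12 + 4 / η := by
  have hfloor : 1 ≤ ⌊η * M / 2⌋₊ := Nat.le_floor (by push_cast; linarith)
  set K := min ⌊η * M / 2⌋₊ (M / 6) with hK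
  have hK1 : 1 ≤ K := le_min hfloor (by omega)
  have hK0 : (0 : ℝ) < K := by exact_mod_cast hK1
  refine ⟨K, hK1, by omega, ?_, ?_⟩
  · have : (K : ℝ) ≤ η * M / 2 :=
      (Nat.cast_le.2 (min_le_left _ _)).trans (Nat.floor_le (by positivity))
    push_cast; linarith
  · rw [div_le_iff₀ hK0]
    rcases le_total ⌊η * M / 2⌋₊ (M / 6) with hle | hle
    · have hlt : η * M / 2 < K + 1 := by
        rw [hK, min_eq_left hle]; exact Nat.lt_floor_add_one _
      have : η * M < 4 * K := by
        have : (1 : ℝ) ≤ K := by exact_mod_cast hK1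
        linarith
      have : (M : ℝ) ≤ 4 / η * K := by
        rw [div_mul_eq_mul_div, le_div_iff₀ hη]; linarith
      linarith
    · have : M ≤ 12 * K := by rw [hK, min_eq_right hle]; omega
      have : (M : ℝ) ≤ 12 * K := by exact_mod_cast this
      have : 0 ≤ 4 / η * K := by positivity
      linarith

theorem stmt_11 (η : ℝ) (hη : 0 < η) :
    ∃ c : ℝ, ∀ (M : ℕ) (F : ℕ → ℝ) (C : ℝ), 0 < C → 2 ≤ η * M →
      (∀ k k' : ℕ, 1 ≤ k → 1 ≤ k' → (k : ℝ) ≤ η * M → (k' : ℝ) ≤ η * M →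
        ∑ x ∈ Finset.Icc 1 (M - k - k'),
          |F (x + k + k') - F (x + k) - F (x + k') + F x| ≤ C) →
      ∃ m b : ℝ, ∑ x ∈ Finset.Icc 1 M, |F x - (m * x + b)| ≤ c * C := by
  refine ⟨4 * (13 + 4 / η) ^ 2 + 1024, fun M F C hC hηM hyp => ?_⟩
  have hηM0 : 0 ≤ η * M := by positivity
  have hF : MixedDiffBound F M ⌊η * M⌋₊ C := fun k hk k' hk' =>
    hyp k k' (mem_Icc.1 hk).1 (mem_Icc.1 hk').1 ((Nat.le_floor_iff hηM0).1 (mem_Icc.1 hk).2)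
      ((Nat.le_floor_iff hηM0).1 (mem_Icc.1 hk').2)
  have hc : 0 ≤ 4 * (13 + 4 / η) ^ 2 := by positivity
  rcases lt_or_ge M 6 with hM | hM
  · obtain ⟨m, b, hmb⟩ :=
      (hF.mono (Nat.le_floor (by push_cast; linarith))).exists_sum_abs_sub_linear_le_of_one
    refine ⟨m, b, hmb.trans (mul_le_mul_of_nonneg_right ?_ hC.le)⟩
    have : (4 : ℝ) ^ M ≤ 4 ^ 5 := pow_le_pow_right₀ (by norm_num) (by omega)
    linarith
  · obtain ⟨K, hK, hKM, h2K, hMK⟩ := exists_scale_of_two_le_mul hη hηM hM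
    obtain ⟨m, b, hmb⟩ :=
      (hF.mono (Nat.le_floor h2K)).exists_sum_abs_sub_linear_le_of_six_mul_le hK hKM
    refine ⟨m, b, hmb.trans (mul_le_mul_of_nonneg_right ?_ hC.le)⟩
    have : (1 + M / K : ℝ) ^ 2 ≤ (13 + 4 / η) ^ 2 :=
      pow_le_pow_left₀ (by positivity) (by linarith) 2
    linarith
end

section
/- Let A : R^E → U be a linear map between finite-dimensional real vector spaces, and suppose there is no nonzero vector w in the nonnegative orthant of R^E with Aw = 0. Then there exists a linear functional f on U such that the transpose A^∨f is a nonzero vector with all coordinates nonnegative in R^E. -/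
/-!
The image of the standard simplex under `A` is the convex hull of the finitely many vectors
`A eₑ`, hence compact and convex, and it misses `0` since every point of the simplex is
nonnegative and nonzero. Strictly separating `0` from it gives a functional `f` with
`f (A eₑ) > 0` for every `e`; the topology needed for the separation comes from a basis of `U`.
-/

open Set

theorem exists_strongDual_pos_of_zero_notMem_convexHull {V : Type*} [TopologicalSpace V]
    [AddCommGroup V] [Module ℝ V] [IsTopologicalAddGroup V] [ContinuousSMul ℝ V]
    [LocallyConvexSpace ℝ V] [T2Space V] {s : Set V} (hs : s.Finite)
    (h0 : (0 : V) ∉ convexHull ℝ s) :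
    ∃ f : StrongDual ℝ V, ∀ x ∈ s, 0 < f x := by
  obtain ⟨f, u, hf0, hfs⟩ :=
    geometric_hahn_banach_point_closed (convex_convexHull ℝ s) (hs.isClosed_convexHull ℝ) h0
  rw [map_zero] at hf0
  exact ⟨f, fun x hx ↦ hf0.trans (hfs x (subset_convexHull ℝ s hx))⟩

theorem exists_dual_pos_of_zero_notMem_convexHull {V : Type*} [AddCommGroup V] [Module ℝ V]
    [FiniteDimensional ℝ V] {s : Set V} (hs : s.Finite) (h0 : (0 : V) ∉ convexHull ℝ s) :
    ∃ f : V →ₗ[ℝ] ℝ, ∀ x ∈ s, 0 < f x := by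
  let φ := (Module.finBasis ℝ V).equivFun.toLinearMap
  have hφ0 : (0 : Fin (Module.finrank ℝ V) → ℝ) ∉ convexHull ℝ (φ '' s) := by
    rw [← φ.image_convexHull, ← map_zero φ]
    exact fun h ↦ h0 ((Module.finBasis ℝ V).equivFun.injective.mem_set_image.1 h)
  obtain ⟨f, hf⟩ := exists_strongDual_pos_of_zero_notMem_convexHull (hs.image φ) hφ0
  exact ⟨f.toLinearMap ∘ₗ φ, fun x hx ↦ hf (φ x) (mem_image_of_mem φ hx)⟩

theorem convexHull_range_apply_single {E U : Type*} [Fintype E] [DecidableEq E]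
    [AddCommGroup U] [Module ℝ U] (A : (E → ℝ) →ₗ[ℝ] U) :
    convexHull ℝ (range fun e ↦ A (Pi.single e 1)) = A '' stdSimplex ℝ E := by
  have hbasis : (fun i j : E ↦ if i = j then (1 : ℝ) else 0) = fun i ↦ Pi.single i 1 := by
    ext i j
    simp [Pi.single_apply, eq_comm]
  rw [← convexHull_basis_eq_stdSimplex, hbasis, A.image_convexHull, ← range_comp]
  rfl

theorem zero_notMem_image_stdSimplex {E U : Type*} [Fintype E] [AddCommGroup U] [Module ℝ U]
    {A : (E → ℝ) →ₗ[ℝ] U} (hker : ∀ w : E → ℝ, (∀ e, 0 ≤ w e) → A w = 0 → w = 0) :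
    (0 : U) ∉ A '' stdSimplex ℝ E := by
  rintro ⟨w, ⟨hw_nonneg, hw_sum⟩, hAw⟩
  simp [hker w hw_nonneg hAw] at hw_sum

theorem stmt_15 (E : Type*) [Fintype E] [Nonempty E] [DecidableEq E]
    (U : Type*) [AddCommGroup U] [Module ℝ U] [FiniteDimensional ℝ U]
    (A : (E → ℝ) →ₗ[ℝ] U)
    (hker : ∀ w : E → ℝ, (∀ e, 0 ≤ w e) → A w = 0 → w = 0) :
    ∃ f : U →ₗ[ℝ] ℝ,
      (∀ e : E, 0 ≤ f (A (Pi.single e 1))) ∧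
      (∃ e : E, f (A (Pi.single e 1)) ≠ 0) := by
  have h0 : (0 : U) ∉ convexHull ℝ (range fun e ↦ A (Pi.single e 1)) := by
    rw [convexHull_range_apply_single]
    exact zero_notMem_image_stdSimplex hker
  obtain ⟨f, hf⟩ := exists_dual_pos_of_zero_notMem_convexHull (finite_range _) h0
  have hpos (e : E) : 0 < f (A (Pi.single e 1)) := hf _ (mem_range_self e)
  obtain ⟨e⟩ := ‹Nonempty E›
  exact ⟨f, fun e ↦ (hpos e).le, e, (hpos e).ne'⟩
end

section
/- Let α be an algebraic integer in an imaginary quadratic field with |α| = 2 such that α/2 is not a root of unity. Then there is no finitely supported probability distribution (X, Y, Z) on C³, supported on the plane x + y − αz = 0, with X, Y, Z all equal in distribution and not almost surely zero. -/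
/-!
Since the weights are positive, equal marginals have equal supports; call this common support
`T`. Every `z ∈ T` is written as `x + y = α z` with `x, y ∈ T`. If `‖z‖` is maximal on `T`, then
`‖x + y‖ = 2 ‖z‖` while `‖x‖, ‖y‖ ≤ ‖z‖`, so by strict convexity `x = y = (α / 2) z`, which again
lies in `T` and has maximal norm. Iterating, the orbit of a nonzero point of maximal norm under
multiplication by `α / 2` stays in the finite set `T`, forcing `α / 2` to have finite order.
-/

open Finset

lemma Finset.image_eq_image_of_sum_filter_eq {ι β R : Type*} [DecidableEq β] [AddCommMonoid R]
    [PartialOrder R] [IsOrderedCancelAddMonoid R] {S : Finset ι} {w : ι → R}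
    (hw : ∀ i ∈ S, 0 < w i) {f g : ι → β}
    (h : ∀ b, ∑ i ∈ S with f i = b, w i = ∑ i ∈ S with g i = b, w i) :
    S.image f = S.image g := by
  have hpos (k : ι → β) (b : β) : 0 < ∑ i ∈ S with k i = b, w i ↔ ∃ i ∈ S, k i = b := by
    rw [sum_pos_iff_of_nonneg fun i hi => (hw i (mem_filter.1 hi).1).le]
    simp only [mem_filter]
    exact ⟨fun ⟨i, ⟨hi, hk⟩, _⟩ => ⟨i, hi, hk⟩, fun ⟨i, hi, hk⟩ => ⟨i, ⟨hi, hk⟩, hw i hi⟩⟩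
  ext b
  simp only [mem_image, ← hpos, h]

lemma eq_of_norm_le_of_norm_add_eq {E : Type*} [NormedAddCommGroup E] [NormedSpace ℝ E]
    [StrictConvexSpace ℝ E] {x y : E} {r : ℝ} (hx : ‖x‖ ≤ r) (hy : ‖y‖ ≤ r)
    (h : ‖x + y‖ = 2 * r) : x = y := by
  have hxy : ‖x + y‖ ≤ ‖x‖ + ‖y‖ := norm_add_le x y
  exact eq_of_norm_eq_of_norm_add_eq (by linarith) (by linarith)

lemma isOfFinOrder_of_forall_mul_mem {M₀ : Type*} [MonoidWithZero M₀] [IsCancelMulZero M₀]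
    {c z : M₀} {T : Set M₀} (hT : T.Finite) (hc : c ≠ 0) (hz : z ∈ T) (hz0 : z ≠ 0)
    (hcT : ∀ x ∈ T, c * x ∈ T) : IsOfFinOrder c := by
  have orbit_mem (n : ℕ) : c ^ n * z ∈ T := by
    induction n with
    | zero => simpa using hz
    | succ n ih => simpa only [pow_succ', mul_assoc] using hcT _ ih
  obtain ⟨m, n, hmn, hpow⟩ := hT.exists_lt_map_eq_of_forall_mem orbit_mem
  have hpow : c ^ m = c ^ n := mul_right_cancel₀ hz0 hpow
  refine isOfFinOrder_iff_pow_eq_one.2 ⟨n - m, Nat.sub_pos_of_lt hmn, ?_⟩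
  rw [← mul_eq_right₀ (pow_ne_zero m hc), pow_sub_mul_pow c hmn.le, hpow]

lemma isOfFinOrder_half_of_forall_exists_add_eq_mul {α : ℂ} (habs : ‖α‖ = 2) {T : Finset ℂ}
    (hT : ∃ z ∈ T, z ≠ 0) (hdecomp : ∀ z ∈ T, ∃ x ∈ T, ∃ y ∈ T, x + y = α * z) :
    IsOfFinOrder (α / 2) := by
  obtain ⟨z₁, hz₁, hz₁0⟩ := hT
  obtain ⟨z₀, hz₀, hmax⟩ := T.exists_max_image (‖·‖) ⟨z₁, hz₁⟩
  have hc : ‖α / 2‖ = 1 := by rw [norm_div, habs]; norm_num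
  have hc0 : α / 2 ≠ 0 := norm_ne_zero_iff.1 (hc ▸ one_ne_zero)
  have hz₀0 : z₀ ≠ 0 := norm_pos_iff.1 ((norm_pos_iff.2 hz₁0).trans_le (hmax z₁ hz₁))
  refine isOfFinOrder_of_forall_mul_mem (T := {z | z ∈ T ∧ ‖z‖ = ‖z₀‖})
    (T.finite_toSet.subset fun z hz => hz.1) hc0 ⟨hz₀, rfl⟩ hz₀0 ?_
  rintro z ⟨hz, hzmax⟩
  obtain ⟨x, hx, y, hy, hxy⟩ := hdecomp z hz
  have hxy_norm : ‖x + y‖ = 2 * ‖z₀‖ := by rw [hxy, norm_mul, habs, hzmax]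
  have hxeq : x = y := eq_of_norm_le_of_norm_add_eq (hmax x hx) (hmax y hy) hxy_norm
  have hx_half : x = α / 2 * z := by linear_combination (hxy + hxeq) / 2
  refine ⟨hx_half ▸ hx, ?_⟩
  rw [norm_mul, hc, one_mul, hzmax]

theorem stmt_17_general (α : ℂ)
    (habs : ‖α‖ = 2)
    (hroot : ¬ ∃ n : ℕ, 0 < n ∧ (α / 2) ^ n = 1) :
    ¬ ∃ (S : Finset (ℂ × ℂ × ℂ)) (w : ℂ × ℂ × ℂ → ℝ),
      (∀ x ∈ S, 0 < w x) ∧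
      (∑ x ∈ S, w x = 1) ∧
      (∀ x ∈ S, x.1 + x.2.1 - α * x.2.2 = 0) ∧
      (∀ y : ℂ,
        ∑ x ∈ S.filter (fun x => x.1 = y), w x =
          ∑ x ∈ S.filter (fun x => x.2.1 = y), w x ∧
        ∑ x ∈ S.filter (fun x => x.2.1 = y), w x =
          ∑ x ∈ S.filter (fun x => x.2.2 = y), w x) ∧
      (∃ x ∈ S, x ≠ 0) := by
  rintro ⟨S, w, hw, -, hplane, hmarg, p₀, hp₀, hp₀0⟩
  have hYZ := image_eq_image_of_sum_filter_eq hw fun y => (hmarg y).2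
  have hXZ := (image_eq_image_of_sum_filter_eq hw fun y => (hmarg y).1).trans hYZ
  set T := S.image fun p => p.2.2
  have hX {p} (hp : p ∈ S) : p.1 ∈ T := hXZ ▸ mem_image_of_mem _ hp
  have hY {p} (hp : p ∈ S) : p.2.1 ∈ T := hYZ ▸ mem_image_of_mem _ hp
  have hZ {p} (hp : p ∈ S) : p.2.2 ∈ T := mem_image_of_mem _ hp
  have hT : ∃ z ∈ T, z ≠ 0 := by
    by_contra! h
    exact hp₀0 (Prod.ext (h _ (hX hp₀)) (Prod.ext (h _ (hY hp₀)) (h _ (hZ hp₀))))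
  refine hroot <| isOfFinOrder_iff_pow_eq_one.1 <|
    isOfFinOrder_half_of_forall_exists_add_eq_mul habs hT fun z hz => ?_
  obtain ⟨p, hp, rfl⟩ := mem_image.1 hz
  exact ⟨p.1, hX hp, p.2.1, hY hp, sub_eq_zero.1 (hplane p hp)⟩

theorem stmt_17 (α : ℂ) (hint : IsIntegral ℤ α)
    (hquad : (minpoly ℚ α).natDegree = 2) (him : α.im ≠ 0)
    (habs : ‖α‖ = 2)
    (hroot : ¬ ∃ n : ℕ, 0 < n ∧ (α / 2) ^ n = 1) :
    ¬ ∃ (S : Finset (ℂ × ℂ × ℂ)) (w : ℂ × ℂ × ℂ → ℝ),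
      (∀ x ∈ S, 0 < w x) ∧
      (∑ x ∈ S, w x = 1) ∧
      (∀ x ∈ S, x.1 + x.2.1 - α * x.2.2 = 0) ∧
      (∀ y : ℂ,
        ∑ x ∈ S.filter (fun x => x.1 = y), w x =
          ∑ x ∈ S.filter (fun x => x.2.1 = y), w x ∧
        ∑ x ∈ S.filter (fun x => x.2.1 = y), w x =
          ∑ x ∈ S.filter (fun x => x.2.2 = y), w x) ∧
      (∃ x ∈ S, x ≠ 0) :=
  stmt_17_general α habs hroot
end
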